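/- arXiv:2201.06277 — 4 statements merged into one kernel-verified Lean document; each statement's English description precedes it below -/
import Mathlib

section
/- Assume the SCAR assumption e(x) = e_m for all x ∈ ℝ^d with 0 < e_m ≤ 1, V ≥ 2, n·e_m ≥ V, and set h' = √(V/(n·e_m)). If 0 < h ≤ h', then there exists an absolute constant κ₂ > 0 such that the minimax risk satisfies R(S,h) ≥ κ₂·√((V−1)/(n·e_m)). -/
open MeasureTheory ProbabilityTheory Real Filter Topology

noncomputable section

/-- A classifier: a measurable `{0,1}`-valued function on the feature space. -/
def IsClassifier {α : Type*} [MeasurableSpace α] (g : α → ℝ) : Prop :=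
  Measurable g ∧ ∀ x, g x = 0 ∨ g x = 1

/-- `η` is a version of the regression function `x ↦ P(Y = 1 ∣ X = x)`. -/
def IsRegression {Ω α : Type*} [MeasurableSpace Ω] [MeasurableSpace α]
    (P : Measure Ω) (X : Ω → α) (Y : Ω → ℝ) (η : α → ℝ) : Prop :=
  Measurable η ∧ (∀ x, 0 ≤ η x ∧ η x ≤ 1) ∧
    ∀ A : Set α, MeasurableSet A →
      ∫ ω in X ⁻¹' A, Y ω ∂P = ∫ ω in X ⁻¹' A, η (X ω) ∂P

/-- `e` is the propensity: `P(S = 1 ∣ Y = 1, X = x) = e x` and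
`P(S = 1 ∣ Y = 0, X = x) = 0` (the latter is equivalent to `S ≤ Y` a.s.). -/
def IsPropensity {Ω α : Type*} [MeasurableSpace Ω] [MeasurableSpace α]
    (P : Measure Ω) (X : Ω → α) (Y S : Ω → ℝ) (e : α → ℝ) : Prop :=
  Measurable e ∧ (∀ x, 0 ≤ e x ∧ e x ≤ 1) ∧
    (∀ᵐ ω ∂P, S ω ≤ Y ω) ∧
    ∀ A : Set α, MeasurableSet A →
      ∫ ω in X ⁻¹' A, S ω ∂P = ∫ ω in X ⁻¹' A, e (X ω) * Y ω ∂P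

/-- Misclassification risk `R(g) = P(g(X) ≠ Y)`. -/
def risk {Ω α : Type*} [MeasurableSpace Ω]
    (P : Measure Ω) (X : Ω → α) (Y : Ω → ℝ) (g : α → ℝ) : ℝ :=
  (P {ω | g (X ω) ≠ Y ω}).toReal

/-- The Bayes classifier `g*(x) = 1{η(x) ≥ 1/2}`. -/
def bayes {α : Type*} (η : α → ℝ) : α → ℝ := fun x => if (1 : ℝ) / 2 ≤ η x then 1 else 0

/-- Excess risk `ℓ(g, g*) = R(g) − R(g*)`. -/
def excessRisk {Ω α : Type*} [MeasurableSpace Ω]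
    (P : Measure Ω) (X : Ω → α) (Y : Ω → ℝ) (η : α → ℝ) (g : α → ℝ) : ℝ :=
  risk P X Y g - risk P X Y (bayes η)

/-- The SAR loss `r_SAR(g,(x,s)) = (1{s=1}/e(x))·(2·1{g(x)≠1} − 1) + 1{g(x)≠0}`. -/
def rSAR {α : Type*} (e : α → ℝ) (g : α → ℝ) (p : α × ℝ) : ℝ :=
  (if p.2 = 1 then (1 : ℝ) else 0) / e p.1 * (2 * (if g p.1 ≠ 1 then (1 : ℝ) else 0) - 1)
    + (if g p.1 ≠ 0 then (1 : ℝ) else 0)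

/-- Empirical risk `(1/n)·Σ_{i=1}^n r(g,(X_i,S_i))` of a generic loss `r` on an `n`-sample. -/
def empRisk {Ω α : Type*} (r : (α → ℝ) → α × ℝ → ℝ) (X : Ω → α) (S : Ω → ℝ) (n : ℕ)
    (g : α → ℝ) (ω : Fin n → Ω) : ℝ :=
  (1 / (n : ℝ)) * ∑ i : Fin n, r g (X (ω i), S (ω i))

/-- A finite set of points is shattered by the class `𝒮`: every labeling is realized. -/
def Shatters {α : Type*} (𝒮 : Set (α → ℝ)) {k : ℕ} (x : Fin k → α) : Prop :=
  ∀ b : Fin k → Bool, ∃ g ∈ 𝒮, ∀ i, g (x i) = if b i then 1 else 0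

/-- The class `𝒮` has VC dimension exactly `V`. -/
def HasVCDim {α : Type*} (𝒮 : Set (α → ℝ)) (V : ℕ) : Prop :=
  (∃ x : Fin V → α, Shatters 𝒮 x) ∧ ∀ x : Fin (V + 1) → α, ¬ Shatters 𝒮 x

/-- Separability assumption (A₁): a countable subclass `𝒮' ⊆ 𝒮` that is dense in
the sense of pointwise convergence of the loss `r`. -/
def SeparableClass {α : Type*} (r : (α → ℝ) → α × ℝ → ℝ) (𝒮 𝒮' : Set (α → ℝ)) : Prop :=
  𝒮' ⊆ 𝒮 ∧ 𝒮'.Countable ∧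
    ∀ g ∈ 𝒮, ∃ u : ℕ → α → ℝ, (∀ k, u k ∈ 𝒮') ∧
      ∀ p : α × ℝ, Tendsto (fun k => r (u k) p) atTop (𝓝 (r g p))

/-- The set of admissible distributions for the minimax risk: `μ` is the joint law of
`(X, Y, S)`, with regression function `η` satisfying the Massart noise condition with
margin `h`, Bayes classifier in `𝒮`, and propensity `e`. -/
def PUAdmissible {α : Type*} [MeasurableSpace α] (e : α → ℝ) (𝒮 : Set (α → ℝ)) (h : ℝ)
    (μ : Measure (α × ℝ × ℝ)) (η : α → ℝ) : Prop :=
  IsProbabilityMeasure μ ∧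
    (∀ᵐ p ∂μ, (p.2.1 = 0 ∨ p.2.1 = 1) ∧ (p.2.2 = 0 ∨ p.2.2 = 1)) ∧
    IsRegression μ (fun p => p.1) (fun p => p.2.1) η ∧
    IsPropensity μ (fun p => p.1) (fun p => p.2.1) (fun p => p.2.2) e ∧
    bayes η ∈ 𝒮 ∧ (∀ x, h ≤ |2 * η x - 1|)

/-- Minimax risk: infimum over estimators (functions of the observed `(X_i, S_i)` sample,
valued in `𝒮`) of the supremum over admissible distributions of the expected excess risk. -/
def minimaxRisk {α : Type*} [MeasurableSpace α] (e : α → ℝ) (𝒮 : Set (α → ℝ)) (h : ℝ)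
    (n : ℕ) : ℝ :=
  ⨅ ghat : {f : (Fin n → α × ℝ) → α → ℝ // ∀ z, f z ∈ 𝒮},
    ⨆ q : {q : Measure (α × ℝ × ℝ) × (α → ℝ) // PUAdmissible e 𝒮 h q.1 q.2},
      ∫ z, excessRisk q.1.1 (fun p => p.1) (fun p => p.2.1) q.1.2 (ghat.1 z)
        ∂(Measure.pi fun _ : Fin n => q.1.1.map (fun p => (p.1, p.2.2)))

/-!
Assouad's method. Take `V` points `x i` shattered by `𝒮` and, for every `σ : Fin V → Bool`, a
classifier `g σ ∈ 𝒮` with `g σ (x i) = σ i`. Let `h' = √(V / (n e_m)) ≤ 1`. Under `P_σ`, `X` is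
uniform on the points, the regression function is `(1 - h') / 2 + h' * g σ` (so `g σ` is the Bayes
classifier and the margin is `h' ≥ h`) and `S ∣ Y ~ Bernoulli (e_m * Y)`. The excess risk of a classifier is `h' / V` times the
number of points on which it disagrees with `σ`.

Flipping one coordinate of `σ` changes the law of an observation `(X, S)` only at one point, where
`P(S = 1)` moves between `e_m (1 ± h') / 2`; hence its Hellinger affinity is at least
`1 - e_m h'² / V = 1 - 1 / n`, and that of the `n`-sample at least `(1 - 1 / n) ^ n ≥ exp (-2)`.
By Le Cam's two-point bound every estimator errs on that coordinate with probability of order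
`exp (-4)`, and averaging over the hypercube yields a `σ` with expected excess risk at least
`exp (-4) / 4 * h' ≥ exp (-4) / 4 * √((V - 1) / (n e_m))`.
-/

open Finset

section AtomicMeasure

variable {β γ K : Type*} [MeasurableSpace β] [Fintype K]

def atomicMeasure (w : K → ℝ) (a : K → β) : Measure β :=
  ∑ k, ENNReal.ofReal (w k) • Measure.dirac (a k)

instance (w : K → ℝ) (a : K → β) : IsFiniteMeasure (atomicMeasure w a) :=
  ⟨by simp [atomicMeasure, ENNReal.sum_lt_top]⟩

lemma map_atomicMeasure_prod {K' L : Type*} [Fintype K'] [Fintype L] [MeasurableSpace γ]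
    {w : K' × L → ℝ} (hw : 0 ≤ w) (a : K' × L → β) {f : β → γ} (hf : Measurable f)
    (a' : K' → γ) (hfa : ∀ k l, f (a (k, l)) = a' k) :
    (atomicMeasure w a).map f = atomicMeasure (fun k => ∑ l, w (k, l)) a' := by
  rw [atomicMeasure, Measure.map_finset_sum' hf.aemeasurable, atomicMeasure,
    Fintype.sum_prod_type]
  refine sum_congr rfl fun k _ => ?_
  simp_rw [Measure.map_smul, Measure.map_dirac' hf, hfa, ← sum_smul,
    ENNReal.ofReal_sum_of_nonneg fun l _ => hw (k, l)]

variable [MeasurableSingletonClass β] {w : K → ℝ} (a : K → β)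

lemma atomicMeasure_apply (s : Set β) [DecidablePred (· ∈ s)] :
    atomicMeasure w a s = ∑ k with a k ∈ s, ENNReal.ofReal (w k) := by
  simp [atomicMeasure, Measure.dirac_apply, Finset.sum_filter, Set.indicator_apply]

lemma atomicMeasure_real_apply (hw : 0 ≤ w) (s : Set β) [DecidablePred (· ∈ s)] :
    (atomicMeasure w a).real s = ∑ k with a k ∈ s, w k := by
  rw [measureReal_def, atomicMeasure_apply, ENNReal.toReal_sum (fun _ _ => ENNReal.ofReal_ne_top)]
  exact sum_congr rfl fun k _ => ENNReal.toReal_ofReal (hw k)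

lemma isProbabilityMeasure_atomicMeasure (hw : 0 ≤ w) (hw1 : ∑ k, w k = 1) :
    IsProbabilityMeasure (atomicMeasure w a) := by
  classical
  refine ⟨?_⟩
  rw [atomicMeasure_apply, filter_true_of_mem fun _ _ => Set.mem_univ _,
    ← ENNReal.ofReal_sum_of_nonneg fun k _ => hw k, hw1, ENNReal.ofReal_one]

lemma ae_atomicMeasure {P : β → Prop} (hP : ∀ k, 0 < w k → P (a k)) :
    ∀ᵐ b ∂atomicMeasure w a, P b := by
  classical
  rw [ae_iff, atomicMeasure_apply]
  refine sum_eq_zero fun k hk => ENNReal.ofReal_eq_zero.2 ?_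
  exact not_lt.1 fun hwk => (mem_filter.1 hk).2 (hP k hwk)

lemma integral_atomicMeasure (hw : 0 ≤ w) (f : β → ℝ) :
    ∫ b, f b ∂atomicMeasure w a = ∑ k, w k * f (a k) := by
  rw [atomicMeasure, integral_finsetSum_measure fun k _ =>
    (integrable_dirac (by simp)).smul_measure ENNReal.ofReal_ne_top]
  refine sum_congr rfl fun k _ => ?_
  rw [integral_smul_measure, integral_dirac, ENNReal.toReal_ofReal (hw k), smul_eq_mul]

lemma setIntegral_atomicMeasure (hw : 0 ≤ w) (f : β → ℝ) {s : Set β} (hs : MeasurableSet s) :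
    ∫ b in s, f b ∂atomicMeasure w a = ∑ k, w k * s.indicator f (a k) := by
  rw [← integral_indicator hs, integral_atomicMeasure a hw]

lemma pi_atomicMeasure {ι : Type*} [Fintype ι] [DecidableEq ι] (hw : 0 ≤ w) :
    Measure.pi (fun _ : ι => atomicMeasure w a) =
      atomicMeasure (fun φ : ι → K => ∏ i, w (φ i)) (fun φ i => a (φ i)) := by
  classical
  refine Measure.pi_eq fun s _ => ?_
  simp_rw [atomicMeasure_apply, sum_filter, Set.mem_univ_pi, Fintype.prod_sum,
    prod_ite_zero, mem_univ, true_implies]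
  refine sum_congr rfl fun φ _ => ?_
  rw [ENNReal.ofReal_prod_of_nonneg fun i _ => hw (φ i)]

end AtomicMeasure

section HellingerAffinity

variable {K : Type*} [Fintype K]

def hellingerAffinity (p q : K → ℝ) : ℝ := ∑ k, √(p k * q k)

lemma sq_hellingerAffinity_le_two_mul_sum_min {p q : K → ℝ} (hp : 0 ≤ p) (hq : 0 ≤ q)
    (hp1 : ∑ k, p k ≤ 1) (hq1 : ∑ k, q k ≤ 1) :
    hellingerAffinity p q ^ 2 ≤ 2 * ∑ k, min (p k) (q k) := by
  have hmin : 0 ≤ ∑ k, min (p k) (q k) := sum_nonneg fun k _ => le_min (hp k) (hq k)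
  have hmax : ∑ k, max (p k) (q k) ≤ 2 :=
    calc ∑ k, max (p k) (q k) ≤ ∑ k, (p k + q k) :=
          sum_le_sum fun k _ => max_le_add_of_nonneg (hp k) (hq k)
      _ ≤ 2 := by rw [sum_add_distrib]; linarith
  have hcs : hellingerAffinity p q ≤ √(∑ k, min (p k) (q k)) * √(∑ k, max (p k) (q k)) :=
    calc hellingerAffinity p q = ∑ k, √(min (p k) (q k)) * √(max (p k) (q k)) :=
          sum_congr rfl fun k _ => by rw [← Real.sqrt_mul (le_min (hp k) (hq k)), min_mul_max]
      _ ≤ _ := Real.sum_sqrt_mul_sqrt_le _ (fun k => le_min (hp k) (hq k))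
          fun k => (hp k).trans (le_max_left _ _)
  calc hellingerAffinity p q ^ 2
      ≤ (√(∑ k, min (p k) (q k)) * √(∑ k, max (p k) (q k))) ^ 2 :=
        pow_le_pow_left₀ (sum_nonneg fun k _ => Real.sqrt_nonneg _) hcs 2
    _ = (∑ k, min (p k) (q k)) * ∑ k, max (p k) (q k) := by
        rw [mul_pow, Real.sq_sqrt hmin, Real.sq_sqrt (hmin.trans (sum_le_sum
          fun k _ => min_le_max))]
    _ ≤ 2 * ∑ k, min (p k) (q k) := by nlinarith

lemma sum_min_le_sum_filter_ne_add {β : Type*} [DecidableEq β] {p q : K → ℝ} (hq : 0 ≤ q)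
    (guess : K → β) {b b' : β} (hb : b ≠ b') :
    ∑ k, min (p k) (q k) ≤ ∑ k with guess k ≠ b, p k + ∑ k with guess k ≠ b', q k := by
  rw [sum_filter, sum_filter, ← sum_add_distrib]
  refine sum_le_sum fun k _ => ?_
  have hqk : 0 ≤ q k := hq k
  have := min_le_left (p k) (q k)
  have := min_le_right (p k) (q k)
  by_cases hk : guess k = b
  · simp only [hk, ne_eq, not_true_eq_false, if_false, hb, not_false_eq_true, if_true, zero_add]
    linarith
  · simp only [ne_eq, hk, not_false_eq_true, if_true]
    split_ifs <;> linarith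

lemma hellingerAffinity_pi (p q : K → ℝ) (hp : 0 ≤ p) (hq : 0 ≤ q) (n : ℕ) :
    hellingerAffinity (fun φ : Fin n → K => ∏ i, p (φ i)) (fun φ => ∏ i, q (φ i)) =
      hellingerAffinity p q ^ n := by
  rw [hellingerAffinity, hellingerAffinity, Fintype.sum_pow]
  refine sum_congr rfl fun φ _ => ?_
  rw [← prod_mul_distrib, Real.sqrt_prod _ fun i _ => mul_nonneg (hp _) (hq _)]

end HellingerAffinity

section Bernoulli

def bernoulliMass (p : ℝ) (b : Bool) : ℝ := if b then p else 1 - p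

variable {p q : ℝ}

lemma bernoulliMass_nonneg (hp : p ∈ Set.Icc 0 1) (b : Bool) : 0 ≤ bernoulliMass p b := by
  cases b <;> simp [bernoulliMass, hp.1, hp.2]

lemma sum_bernoulliMass (p : ℝ) : ∑ b, bernoulliMass p b = 1 := by
  simp [bernoulliMass]

lemma hellingerAffinity_bernoulliMass_self (hp : p ∈ Set.Icc 0 1) :
    hellingerAffinity (bernoulliMass p) (bernoulliMass p) = 1 := by
  simp_rw [hellingerAffinity, Real.sqrt_mul_self (bernoulliMass_nonneg hp _), sum_bernoulliMass]

lemma sq_sqrt_sub_sqrt_le {a b : ℝ} (ha : 0 ≤ a) (hb : 0 ≤ b) :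
    (√a - √b) ^ 2 ≤ (a - b) ^ 2 / (a + b) := by
  rcases (add_nonneg ha hb).eq_or_lt with hab | hab
  · simp [show a = 0 by linarith, show b = 0 by linarith]
  have hsq : (a - b) ^ 2 = (√a - √b) ^ 2 * (√a + √b) ^ 2 := by
    rw [← mul_pow, ← sq_sqrt ha, ← sq_sqrt hb]; ring_nf; simp [sq_sqrt, ha, hb]
  rw [le_div_iff₀ hab, hsq]
  gcongr
  nlinarith [sq_sqrt ha, sq_sqrt hb, Real.sqrt_nonneg a, Real.sqrt_nonneg b]

lemma one_sub_div_le_hellingerAffinity_bernoulliMass (hp : 0 ≤ p) (hq : 0 ≤ q)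
    (hpq : 0 < p + q) (hpq1 : p + q ≤ 1) :
    1 - (p - q) ^ 2 / (p + q) ≤ hellingerAffinity (bernoulliMass p) (bernoulliMass q) := by
  have hp1 : 0 ≤ 1 - p := by linarith
  have hq1 : 0 ≤ 1 - q := by linarith
  have h1 := sq_sqrt_sub_sqrt_le hp hq
  have h2 : (√(1 - p) - √(1 - q)) ^ 2 ≤ (p - q) ^ 2 / (p + q) :=
    calc (√(1 - p) - √(1 - q)) ^ 2 ≤ ((1 - p) - (1 - q)) ^ 2 / ((1 - p) + (1 - q)) :=
          sq_sqrt_sub_sqrt_le hp1 hq1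
      _ ≤ (p - q) ^ 2 / (p + q) := by
          rw [show (1 - p) - (1 - q) = -(p - q) by ring, neg_sq]
          exact div_le_div_of_nonneg_left (sq_nonneg _) hpq (by linarith)
  calc 1 - (p - q) ^ 2 / (p + q)
      ≤ 1 - ((√p - √q) ^ 2 + (√(1 - p) - √(1 - q)) ^ 2) / 2 := by linarith
    _ = √p * √q + √(1 - p) * √(1 - q) := by
        linear_combination (-1 / 2 : ℝ) * (sq_sqrt hp + sq_sqrt hq + sq_sqrt hp1 + sq_sqrt hq1)
    _ = hellingerAffinity (bernoulliMass p) (bernoulliMass q) := by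
        simp [hellingerAffinity, bernoulliMass, Real.sqrt_mul hp, Real.sqrt_mul hp1]

lemma hellingerAffinity_uniform_bernoulliMass {ι : Type*} [Fintype ι] {r r' : ι → ℝ}
    (hr : ∀ i, r i ∈ Set.Icc 0 1) {j : ι} (hrr' : ∀ i ≠ j, r i = r' i) :
    hellingerAffinity (fun k : ι × Bool => (Fintype.card ι : ℝ)⁻¹ * bernoulliMass (r k.1) k.2)
        (fun k => (Fintype.card ι : ℝ)⁻¹ * bernoulliMass (r' k.1) k.2) =
      1 - (1 - hellingerAffinity (bernoulliMass (r j)) (bernoulliMass (r' j))) /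
        Fintype.card ι := by
  have : Nonempty ι := ⟨j⟩
  have hcard : (Fintype.card ι : ℝ) ≠ 0 := Nat.cast_ne_zero.2 Fintype.card_ne_zero
  have hsum : ∑ i, (hellingerAffinity (bernoulliMass (r i)) (bernoulliMass (r' i)) - 1) =
      hellingerAffinity (bernoulliMass (r j)) (bernoulliMass (r' j)) - 1 :=
    Fintype.sum_eq_single j fun i hi => by
      rw [← hrr' i hi, hellingerAffinity_bernoulliMass_self (hr i), sub_self]
  have hsplit : hellingerAffinity (fun k : ι × Bool => (Fintype.card ι : ℝ)⁻¹ *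
      bernoulliMass (r k.1) k.2) (fun k => (Fintype.card ι : ℝ)⁻¹ * bernoulliMass (r' k.1) k.2) =
      (Fintype.card ι : ℝ)⁻¹ *
        ∑ i, hellingerAffinity (bernoulliMass (r i)) (bernoulliMass (r' i)) := by
    simp_rw [hellingerAffinity, Fintype.sum_prod_type, mul_sum]
    refine sum_congr rfl fun i _ => sum_congr rfl fun b _ => ?_
    rw [mul_mul_mul_comm, Real.sqrt_mul (mul_self_nonneg _), Real.sqrt_mul_self (by positivity)]
  rw [sum_sub_distrib, sum_const, card_univ, nsmul_one, sub_eq_iff_eq_add] at hsum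
  rw [hsplit, hsum]
  field_simp
  ring

end Bernoulli

section Assouad

variable {ι Φ β : Type*} [DecidableEq ι]

def flipAt (j : ι) (σ : ι → Bool) : ι → Bool := Function.update σ j (!σ j)

lemma flipAt_apply_self (j : ι) (σ : ι → Bool) : flipAt j σ j = !σ j :=
  Function.update_self _ _ _

lemma flipAt_involutive (j : ι) : Function.Involutive (flipAt j) := fun σ => by
  simp [flipAt, Function.update_idem]

variable [Fintype ι] [Fintype Φ] [DecidableEq β]

/- Assouad's lemma: `W σ` is the law of the sample under `σ` and `guess φ j` the estimator's label
for coordinate `j`; Le Cam's two-point bound is applied along every edge of the hypercube. -/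
theorem exists_sum_error_ge_assouad (W : (ι → Bool) → Φ → ℝ) (hW0 : ∀ σ, 0 ≤ W σ)
    (hW1 : ∀ σ, ∑ φ, W σ φ ≤ 1) {A : ℝ} (hA : 0 ≤ A)
    (hAW : ∀ σ j, A ≤ hellingerAffinity (W σ) (W (flipAt j σ))) {label : Bool → β}
    (hlabel : label true ≠ label false) (guess : Φ → ι → β) :
    ∃ σ, Fintype.card ι * A ^ 2 / 4 ≤ ∑ j, ∑ φ with guess φ j ≠ label (σ j), W σ φ := by
  set E : (ι → Bool) → ι → ℝ := fun σ j => ∑ φ with guess φ j ≠ label (σ j), W σ φ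
  have hpair : ∀ σ j, A ^ 2 / 2 ≤ E σ j + E (flipAt j σ) j := fun σ j => by
    have hne : label (σ j) ≠ label (flipAt j σ j) := by
      rw [flipAt_apply_self]; cases σ j <;> simp [hlabel, hlabel.symm]
    have hmin := sq_hellingerAffinity_le_two_mul_sum_min (hW0 σ) (hW0 (flipAt j σ)) (hW1 σ)
      (hW1 (flipAt j σ))
    have hA2 : A ^ 2 ≤ hellingerAffinity (W σ) (W (flipAt j σ)) ^ 2 :=
      pow_le_pow_left₀ hA (hAW σ j) 2
    linarith [sum_min_le_sum_filter_ne_add (p := W σ) (hW0 (flipAt j σ)) (fun φ => guess φ j) hne]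
  have hcoord : ∀ j, ∑ _σ : ι → Bool, A ^ 2 / 4 ≤ ∑ σ, E σ j := fun j => by
    have hflip : ∑ σ, E (flipAt j σ) j = ∑ σ, E σ j :=
      Equiv.sum_comp (Function.Involutive.toPerm _ (flipAt_involutive j)) fun σ => E σ j
    have := sum_le_sum fun σ (_ : σ ∈ univ) => hpair σ j
    rw [sum_add_distrib, hflip] at this
    simp only [sum_const, nsmul_eq_mul] at this ⊢
    linarith
  obtain ⟨σ, -, hσ⟩ := exists_le_of_sum_le univ_nonempty <|
    calc ∑ _σ : ι → Bool, Fintype.card ι * A ^ 2 / 4 = ∑ _j : ι, ∑ _σ : ι → Bool, A ^ 2 / 4 := by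
          simp only [sum_const, card_univ, nsmul_eq_mul]; ring
      _ ≤ ∑ j, ∑ σ, E σ j := sum_le_sum fun j _ => hcoord j
      _ = ∑ σ, ∑ j, E σ j := sum_comm
  exact ⟨σ, hσ⟩

end Assouad

lemma exp_neg_two_mul_le_one_sub {t : ℝ} (ht0 : 0 ≤ t) (ht : t ≤ 1 / 2) :
    exp (-(2 * t)) ≤ 1 - t := by
  have h : 1 ≤ (1 - t) * exp (2 * t) := by
    nlinarith [add_one_le_exp (2 * t)]
  rw [exp_neg, inv_le_iff_one_le_mul₀ (exp_pos _)]
  linarith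

lemma exp_neg_two_le_one_sub_inv_pow {n : ℕ} (hn : 2 ≤ n) : exp (-2) ≤ (1 - (n : ℝ)⁻¹) ^ n := by
  have hn' : (2 : ℝ) ≤ n := by exact_mod_cast hn
  calc exp (-2) = exp (-(2 * (n : ℝ)⁻¹)) ^ n := by
        rw [← exp_nat_mul]; field_simp
    _ ≤ (1 - (n : ℝ)⁻¹) ^ n := pow_le_pow_left₀ (exp_pos _).le
        (exp_neg_two_mul_le_one_sub (by positivity) (by rw [inv_le_comm₀] <;> linarith)) n

section UniformPULaw

variable {α ι : Type*} [Fintype ι]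

/- The atom `((i, s), y)` is `(X, Y, S) = (x i, y, s)`: `X` is uniform on the points,
`Y ∣ X ~ Bernoulli (η X)` and `S ∣ X, Y ~ Bernoulli (e X * Y)`. Listing the observed coordinates
first makes the law of `(X, S)` a marginal, see `map_atomicMeasure_prod`. -/
def puWeight (x : ι → α) (η e : α → ℝ) (k : (ι × Bool) × Bool) : ℝ :=
  (Fintype.card ι : ℝ)⁻¹ * bernoulliMass (η (x k.1.1)) k.2 *
    bernoulliMass (if k.2 then e (x k.1.1) else 0) k.1.2

def puAtom (x : ι → α) (k : (ι × Bool) × Bool) : α × ℝ × ℝ :=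
  (x k.1.1, if k.2 then 1 else 0, if k.1.2 then 1 else 0)

def puObsWeight (x : ι → α) (η e : α → ℝ) (k : ι × Bool) : ℝ :=
  (Fintype.card ι : ℝ)⁻¹ * bernoulliMass (e (x k.1) * η (x k.1)) k.2

def puObsAtom (x : ι → α) (k : ι × Bool) : α × ℝ := (x k.1, if k.2 then 1 else 0)

variable {x : ι → α} {η e : α → ℝ}

lemma puWeight_nonneg (hη : ∀ t, η t ∈ Set.Icc 0 1) (he : ∀ t, e t ∈ Set.Icc 0 1) :
    0 ≤ puWeight x η e := fun k => by
  have hey : (if k.2 then e (x k.1.1) else 0) ∈ Set.Icc 0 1 := by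
    split_ifs
    · exact he _
    · simp
  have := bernoulliMass_nonneg (hη (x k.1.1)) k.2
  have := bernoulliMass_nonneg hey k.1.2
  unfold puWeight
  positivity

lemma puObsWeight_nonneg (hη : ∀ t, η t ∈ Set.Icc 0 1) (he : ∀ t, e t ∈ Set.Icc 0 1) :
    0 ≤ puObsWeight x η e := fun k => by
  have := bernoulliMass_nonneg (unitInterval.mul_mem (he (x k.1)) (hη (x k.1))) k.2
  unfold puObsWeight
  positivity

lemma sum_puObsWeight [Nonempty ι] : ∑ k, puObsWeight x η e k = 1 := by
  simp_rw [puObsWeight, Fintype.sum_prod_type, ← mul_sum, sum_bernoulliMass, sum_const,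
    card_univ, nsmul_one]
  exact inv_mul_cancel₀ (Nat.cast_ne_zero.2 Fintype.card_ne_zero)

lemma sum_puWeight_fiber (k : ι × Bool) : ∑ y, puWeight x η e (k, y) = puObsWeight x η e k := by
  rcases k with ⟨i, _ | _⟩ <;> simp [puWeight, puObsWeight, bernoulliMass] <;> ring

lemma sum_puWeight [Nonempty ι] : ∑ k, puWeight x η e k = 1 := by
  simp_rw [Fintype.sum_prod_type (f := puWeight x η e), sum_puWeight_fiber, sum_puObsWeight]

variable [MeasurableSpace α]

def uniformPULaw (x : ι → α) (η e : α → ℝ) : Measure (α × ℝ × ℝ) :=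
  atomicMeasure (puWeight x η e) (puAtom x)

lemma map_uniformPULaw (hη : ∀ t, η t ∈ Set.Icc 0 1) (he : ∀ t, e t ∈ Set.Icc 0 1) :
    (uniformPULaw x η e).map (fun p => (p.1, p.2.2)) =
      atomicMeasure (puObsWeight x η e) (puObsAtom x) := by
  rw [uniformPULaw, map_atomicMeasure_prod (puWeight_nonneg hη he) _ (by fun_prop) (puObsAtom x)
    fun _ _ => rfl]
  simp_rw [sum_puWeight_fiber]

variable [MeasurableSingletonClass α]

lemma isProbabilityMeasure_uniformPULaw [Nonempty ι] (hη : ∀ t, η t ∈ Set.Icc 0 1)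
    (he : ∀ t, e t ∈ Set.Icc 0 1) : IsProbabilityMeasure (uniformPULaw x η e) :=
  isProbabilityMeasure_atomicMeasure _ (puWeight_nonneg hη he) sum_puWeight

lemma isRegression_uniformPULaw (hηm : Measurable η) (hη : ∀ t, η t ∈ Set.Icc 0 1)
    (he : ∀ t, e t ∈ Set.Icc 0 1) :
    IsRegression (uniformPULaw x η e) (fun p => p.1) (fun p => p.2.1) η := by
  refine ⟨hηm, hη, fun A hA => ?_⟩
  simp_rw [uniformPULaw, setIntegral_atomicMeasure _ (puWeight_nonneg hη he) _ (measurable_fst hA),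
    Fintype.sum_prod_type, Fintype.sum_bool]
  refine sum_congr rfl fun i _ => ?_
  by_cases hi : x i ∈ A
  · simp [puAtom, puWeight, bernoulliMass, hi]; ring
  · simp [puAtom, hi]

lemma isPropensity_uniformPULaw (hη : ∀ t, η t ∈ Set.Icc 0 1) (hem : Measurable e)
    (he : ∀ t, e t ∈ Set.Icc 0 1) :
    IsPropensity (uniformPULaw x η e) (fun p => p.1) (fun p => p.2.1) (fun p => p.2.2) e := by
  refine ⟨hem, he, ae_atomicMeasure _ fun k hk => ?_, fun A hA => ?_⟩
  · rcases k with ⟨⟨i, _ | _⟩, _ | _⟩ <;> simp_all [puAtom, puWeight, bernoulliMass]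
  simp_rw [uniformPULaw, setIntegral_atomicMeasure _ (puWeight_nonneg hη he) _ (measurable_fst hA),
    Fintype.sum_prod_type, Fintype.sum_bool]
  refine sum_congr rfl fun i _ => ?_
  by_cases hi : x i ∈ A
  · simp [puAtom, puWeight, bernoulliMass, hi]; ring
  · simp [puAtom, hi]

lemma ae_uniformPULaw_mem :
    ∀ᵐ p ∂uniformPULaw x η e, (p.2.1 = 0 ∨ p.2.1 = 1) ∧ (p.2.2 = 0 ∨ p.2.2 = 1) :=
  ae_atomicMeasure _ fun k _ => by
    rcases k with ⟨⟨i, _ | _⟩, _ | _⟩ <;> simp [puAtom]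

lemma risk_uniformPULaw (hη : ∀ t, η t ∈ Set.Icc 0 1) (he : ∀ t, e t ∈ Set.Icc 0 1)
    (g : α → ℝ) :
    risk (uniformPULaw x η e) (fun p => p.1) (fun p => p.2.1) g = (Fintype.card ι : ℝ)⁻¹ *
      ∑ i, ∑ y : Bool, if g (x i) = (if y then 1 else 0) then 0 else bernoulliMass (η (x i)) y := by
  classical
  rw [risk, ← measureReal_def, uniformPULaw, atomicMeasure_real_apply _ (puWeight_nonneg hη he),
    sum_filter, mul_sum, Fintype.sum_prod_type, Fintype.sum_prod_type]
  refine sum_congr rfl fun i _ => ?_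
  simp only [Fintype.sum_bool, puAtom, puWeight, bernoulliMass, Set.mem_ofPred_eq, if_true,
    Bool.false_eq_true, if_false]
  split_ifs <;> first | (exfalso; tauto) | ring

lemma excessRisk_uniformPULaw (hη : ∀ t, η t ∈ Set.Icc 0 1) (he : ∀ t, e t ∈ Set.Icc 0 1)
    {g : α → ℝ} (hg : ∀ i, g (x i) = 0 ∨ g (x i) = 1) :
    excessRisk (uniformPULaw x η e) (fun p => p.1) (fun p => p.2.1) η g =
      (Fintype.card ι : ℝ)⁻¹ * ∑ i with g (x i) ≠ bayes η (x i), |2 * η (x i) - 1| := by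
  rw [excessRisk, risk_uniformPULaw hη he, risk_uniformPULaw hη he, ← mul_sub, ← sum_sub_distrib,
    sum_filter]
  refine congrArg _ (sum_congr rfl fun i _ => ?_)
  rcases hg i with h | h <;> by_cases hi : (2 : ℝ)⁻¹ ≤ η (x i) <;>
    simp [bayes, bernoulliMass, h, hi]
  · rw [abs_of_nonneg (by linarith)]; ring
  · rw [abs_of_neg (by linarith [not_le.1 hi])]; ring

end UniformPULaw

section HardFamily

variable {α : Type*}

def hardRegression (h' : ℝ) (g : α → ℝ) : α → ℝ := fun t => (1 - h') / 2 + h' * g t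

variable {h' : ℝ}

lemma bayes_hardRegression {g : α → ℝ} (hh' : 0 < h') (hg : ∀ t, g t = 0 ∨ g t = 1) :
    bayes (hardRegression h' g) = g := by
  funext t
  rcases hg t with h | h
  · simp [bayes, hardRegression, h]; linarith
  · simp [bayes, hardRegression, h]; linarith

lemma hardRegression_mem_Icc {g : α → ℝ} (hh'0 : 0 ≤ h') (hh'1 : h' ≤ 1) (hg : ∀ t, g t = 0 ∨ g t = 1)
    (t : α) : hardRegression h' g t ∈ Set.Icc 0 1 := by
  rcases hg t with h | h <;> simp [hardRegression, h] <;> constructor <;> linarith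

lemma abs_two_mul_hardRegression_sub_one {g : α → ℝ} (hh' : 0 ≤ h') (hg : ∀ t, g t = 0 ∨ g t = 1)
    (t : α) :
    |2 * hardRegression h' g t - 1| = h' := by
  rcases hg t with h | h <;> simp only [hardRegression, h] <;> ring_nf <;> simp [abs_of_nonneg hh']

variable {ι : Type*} [Fintype ι]

lemma hellingerAffinity_puObsWeight_hardRegression_ge [DecidableEq ι] (x : ι → α)
    {g : (ι → Bool) → α → ℝ} (hgx : ∀ σ i, g σ (x i) = if σ i then 1 else 0) {e : ℝ}
    (he0 : 0 < e) (he1 : e ≤ 1) (hh'0 : 0 ≤ h') (hh'1 : h' ≤ 1) (σ : ι → Bool) (j : ι) :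
    1 - e * h' ^ 2 / Fintype.card ι ≤
      hellingerAffinity (puObsWeight x (hardRegression h' (g σ)) fun _ => e)
        (puObsWeight x (hardRegression h' (g (flipAt j σ))) fun _ => e) := by
  set r : (ι → Bool) → ι → ℝ := fun τ i => e * hardRegression h' (g τ) (x i)
  have hr : ∀ τ i, r τ i = e * ((1 - h') / 2 + h' * if τ i then 1 else 0) := fun τ i => by
    simp only [r, hardRegression, hgx]
  have hr01 : ∀ τ i, r τ i ∈ Set.Icc 0 1 := fun τ i => by
    rw [hr]; split_ifs <;> constructor <;> nlinarith
  have hbern : 1 - e * h' ^ 2 ≤ hellingerAffinity (bernoulliMass (r σ j))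
      (bernoulliMass (r (flipAt j σ) j)) := by
    have hsum : r σ j + r (flipAt j σ) j = e := by
      rw [hr, hr, flipAt_apply_self]; cases σ j <;> simp <;> ring
    have hdiff : (r σ j - r (flipAt j σ) j) ^ 2 = e ^ 2 * h' ^ 2 := by
      rw [hr, hr, flipAt_apply_self]; cases σ j <;> simp <;> ring
    have := one_sub_div_le_hellingerAffinity_bernoulliMass (hr01 σ j).1 (hr01 _ j).1
      (hsum ▸ he0) (hsum ▸ he1)
    rwa [hsum, hdiff, sq, mul_assoc, mul_div_cancel_left₀ _ he0.ne'] at this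
  refine le_of_le_of_eq ?_ (hellingerAffinity_uniform_bernoulliMass (hr01 σ)
    (r' := r (flipAt j σ)) (j := j) fun i hi => by
      simp only [hr, flipAt, Function.update_of_ne hi]).symm
  gcongr
  linarith

variable [MeasurableSpace α] [MeasurableSingletonClass α]

lemma puAdmissible_uniformPULaw_hardRegression [Nonempty ι] (x : ι → α) {g e : α → ℝ}
    (hem : Measurable e) (he : ∀ t, e t ∈ Set.Icc 0 1) {𝒮 : Set (α → ℝ)} (hg𝒮 : g ∈ 𝒮)
    (hg : IsClassifier g) {h : ℝ} (hh : h ≤ h') (hh'0 : 0 < h') (hh'1 : h' ≤ 1) :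
    PUAdmissible e 𝒮 h (uniformPULaw x (hardRegression h' g) e) (hardRegression h' g) := by
  have hη := hardRegression_mem_Icc hh'0.le hh'1 hg.2
  refine ⟨isProbabilityMeasure_uniformPULaw hη he, ae_uniformPULaw_mem,
    isRegression_uniformPULaw (measurable_const.add (measurable_const.mul hg.1)) hη he,
    isPropensity_uniformPULaw hη hem he, ?_, fun t => ?_⟩
  · rwa [bayes_hardRegression hh'0 hg.2]
  · rwa [abs_two_mul_hardRegression_sub_one hh'0.le hg.2]

lemma integral_excessRisk_uniformPULaw_hardRegression (x : ι → α) {g : α → ℝ}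
    (hg : ∀ t, g t = 0 ∨ g t = 1) {e : ℝ} (he : e ∈ Set.Icc 0 1) (hh'0 : 0 < h') (hh'1 : h' ≤ 1)
    {n : ℕ} (F : (Fin n → α × ℝ) → α → ℝ) (hF : ∀ z i, F z (x i) = 0 ∨ F z (x i) = 1) :
    ∫ z, excessRisk (uniformPULaw x (hardRegression h' g) fun _ => e) (fun p => p.1)
        (fun p => p.2.1) (hardRegression h' g) (F z)
        ∂(Measure.pi fun _ : Fin n =>
          (uniformPULaw x (hardRegression h' g) fun _ => e).map fun p => (p.1, p.2.2)) =
      h' / (Fintype.card ι : ℝ) * ∑ i, ∑ φ : Fin n → ι × Bool with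
        F (fun l => puObsAtom x (φ l)) (x i) ≠ g (x i),
          ∏ l, puObsWeight x (hardRegression h' g) (fun _ => e) (φ l) := by
  have hη := hardRegression_mem_Icc hh'0.le hh'1 hg
  have hW := puObsWeight_nonneg (x := x) hη fun _ => he
  rw [map_uniformPULaw hη fun _ => he, pi_atomicMeasure _ hW,
    integral_atomicMeasure _ fun φ => prod_nonneg fun l _ => hW (φ l)]
  simp_rw [excessRisk_uniformPULaw hη (fun _ => he) (hF _), bayes_hardRegression hh'0 hg,
    abs_two_mul_hardRegression_sub_one hh'0.le hg, sum_filter, mul_sum]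
  rw [sum_comm]
  refine sum_congr rfl fun i _ => sum_congr rfl fun φ _ => ?_
  split_ifs <;> ring

theorem exists_le_integral_excessRisk_hardRegression [DecidableEq ι] (x : ι → α)
    {g : (ι → Bool) → α → ℝ} (hg : ∀ σ t, g σ t = 0 ∨ g σ t = 1)
    (hgx : ∀ σ i, g σ (x i) = if σ i then 1 else 0) {e : ℝ} (he0 : 0 < e) (he1 : e ≤ 1)
    (hh'0 : 0 < h') (hh'1 : h' ≤ 1) {n : ℕ} (hn : 2 ≤ n)
    (hnh' : n * (e * h' ^ 2) ≤ Fintype.card ι) (F : (Fin n → α × ℝ) → α → ℝ)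
    (hF : ∀ z i, F z (x i) = 0 ∨ F z (x i) = 1) :
    ∃ σ, exp (-4) / 4 * h' ≤
      ∫ z, excessRisk (uniformPULaw x (hardRegression h' (g σ)) fun _ => e) (fun p => p.1)
        (fun p => p.2.1) (hardRegression h' (g σ)) (F z)
        ∂(Measure.pi fun _ : Fin n =>
          (uniformPULaw x (hardRegression h' (g σ)) fun _ => e).map fun p => (p.1, p.2.2)) := by
  have hn0 : (0 : ℝ) < n := by positivity
  have hcard : (0 : ℝ) < Fintype.card ι := hnh'.trans_lt' (by positivity)
  have : Nonempty ι := Fintype.card_pos_iff.1 (by exact_mod_cast hcard)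
  have hη σ := hardRegression_mem_Icc hh'0.le hh'1 (hg σ)
  have hw σ := puObsWeight_nonneg (x := x) (hη σ) fun _ => ⟨he0.le, he1⟩
  set W : (ι → Bool) → (Fin n → ι × Bool) → ℝ :=
    fun σ φ => ∏ l, puObsWeight x (hardRegression h' (g σ)) (fun _ => e) (φ l)
  have hW0 σ : 0 ≤ W σ := fun φ => prod_nonneg fun l _ => hw σ (φ l)
  have hW1 σ : ∑ φ, W σ φ ≤ 1 := by
    simp only [W, ← Fintype.sum_pow, sum_puObsWeight, one_pow, le_refl]
  have hAff σ j : exp (-2) ≤ hellingerAffinity (W σ) (W (flipAt j σ)) := by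
    have h1 : 1 - (n : ℝ)⁻¹ ≤ 1 - e * h' ^ 2 / Fintype.card ι := by
      rw [sub_le_sub_iff_left, div_le_iff₀ hcard, inv_mul_eq_div, le_div_iff₀ hn0]
      linarith
    rw [hellingerAffinity_pi _ _ (hw σ) (hw _)]
    refine (exp_neg_two_le_one_sub_inv_pow hn).trans (pow_le_pow_left₀ ?_ (h1.trans
      (hellingerAffinity_puObsWeight_hardRegression_ge x hgx he0 he1 hh'0.le hh'1 σ j)) n)
    linarith [inv_le_one_of_one_le₀ (by exact_mod_cast (by omega : 1 ≤ n) : (1 : ℝ) ≤ n)]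
  obtain ⟨σ, hσ⟩ := exists_sum_error_ge_assouad W hW0 hW1 (exp_pos _).le hAff
    (label := fun b : Bool => if b then (1 : ℝ) else 0) (by norm_num)
    fun φ i => F (fun l => puObsAtom x (φ l)) (x i)
  refine ⟨σ, ?_⟩
  rw [integral_excessRisk_uniformPULaw_hardRegression x (hg σ) ⟨he0.le, he1⟩ hh'0 hh'1 F hF]
  simp_rw [hgx σ]
  calc exp (-4) / 4 * h' = h' / Fintype.card ι * (Fintype.card ι * exp (-2) ^ 2 / 4) := by
        rw [← exp_nat_mul]; field_simp; norm_num
    _ ≤ _ := mul_le_mul_of_nonneg_left hσ (by positivity)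

end HardFamily

lemma abs_excessRisk_le_one {Ω α : Type*} [MeasurableSpace Ω] (P : Measure Ω)
    [IsProbabilityMeasure P] (X : Ω → α) (Y : Ω → ℝ) (η g : α → ℝ) :
    |excessRisk P X Y η g| ≤ 1 := by
  rw [excessRisk, risk, risk, ← measureReal_def, ← measureReal_def, abs_le]
  constructor <;> linarith [measureReal_nonneg (μ := P) (s := {ω | g (X ω) ≠ Y ω}),
    measureReal_nonneg (μ := P) (s := {ω | bayes η (X ω) ≠ Y ω}),
    measureReal_le_one (μ := P) (s := {ω | g (X ω) ≠ Y ω}),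
    measureReal_le_one (μ := P) (s := {ω | bayes η (X ω) ≠ Y ω})]

lemma bddAbove_range_integral_excessRisk {α : Type*} [MeasurableSpace α] (e : α → ℝ)
    (𝒮 : Set (α → ℝ)) (h : ℝ) {n : ℕ} (F : (Fin n → α × ℝ) → α → ℝ) :
    BddAbove (Set.range fun q : {q : Measure (α × ℝ × ℝ) × (α → ℝ) // PUAdmissible e 𝒮 h q.1 q.2} =>
      ∫ z, excessRisk q.1.1 (fun p => p.1) (fun p => p.2.1) q.1.2 (F z)
        ∂(Measure.pi fun _ : Fin n => q.1.1.map (fun p => (p.1, p.2.2)))) := by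
  refine ⟨1, ?_⟩
  rintro _ ⟨q, rfl⟩
  have := q.2.1
  have : IsProbabilityMeasure (q.1.1.map fun p => (p.1, p.2.2)) :=
    Measure.isProbabilityMeasure_map (by fun_prop)
  refine (le_abs_self _).trans ?_
  simpa using norm_integral_le_of_norm_le_const
    (μ := Measure.pi fun _ : Fin n => q.1.1.map fun p => (p.1, p.2.2))
    (Eventually.of_forall fun z =>
      (Real.norm_eq_abs _).trans_le (abs_excessRisk_le_one q.1.1 _ _ _ (F z)))

/-- **Theorem 2, case C₂ (Lower bound on minimax risk under SCAR assumption).**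
Under the SCAR assumption `e(x) = e_m` with `0 < e_m ≤ 1`, if `V ≥ 2`, `n·e_m ≥ V` and
`0 < h ≤ h' = √(V/(n·e_m))`, then there is an absolute constant `κ₂ > 0` with
`R(S,h) ≥ κ₂·√((V−1)/(n·e_m))`. -/
theorem minimax_lower_bound_SCAR_case2 :
    ∃ κ₂ : ℝ, 0 < κ₂ ∧
      ∀ (d : ℕ) (𝒮 : Set ((Fin d → ℝ) → ℝ)) (V n : ℕ) (e_m h : ℝ),
        (∀ g ∈ 𝒮, IsClassifier g) → HasVCDim 𝒮 V →
        2 ≤ V → 0 < e_m → e_m ≤ 1 → (V : ℝ) ≤ (n : ℝ) * e_m →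
        0 < h → h ≤ Real.sqrt ((V : ℝ) / ((n : ℝ) * e_m)) →
        κ₂ * Real.sqrt (((V : ℝ) - 1) / ((n : ℝ) * e_m)) ≤
          minimaxRisk (fun _ : Fin d → ℝ => e_m) 𝒮 h n := by
  refine ⟨exp (-4) / 4, by positivity, fun d 𝒮 V n e_m h h𝒮 hVC hV he0 he1 hVn _ hh => ?_⟩
  obtain ⟨x, hx⟩ := hVC.1
  choose g hg𝒮 hgx using hx
  have hn : 2 ≤ n := by
    have : (V : ℝ) ≤ n := hVn.trans (mul_le_of_le_one_right (Nat.cast_nonneg _) he1)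
    exact_mod_cast (Nat.ofNat_le_cast.2 hV).trans this
  have hne : 0 < (n : ℝ) * e_m := by positivity
  set h' := √((V : ℝ) / (n * e_m))
  have hh'0 : 0 < h' := Real.sqrt_pos.2 (by positivity)
  have hh'1 : h' ≤ 1 := Real.sqrt_le_one.2 ((div_le_one hne).2 hVn)
  have hnh' : n * (e_m * h' ^ 2) ≤ Fintype.card (Fin V) := by
    rw [Fintype.card_fin, Real.sq_sqrt (by positivity)]; field_simp; rfl
  have : Nonempty (Fin V) := ⟨⟨0, by omega⟩⟩
  have : Nonempty {f : (Fin n → (Fin d → ℝ) × ℝ) → (Fin d → ℝ) → ℝ // ∀ z, f z ∈ 𝒮} :=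
    ⟨⟨fun _ => g default, fun _ => hg𝒮 _⟩⟩
  refine le_ciInf fun F => ?_
  obtain ⟨σ, hσ⟩ := exists_le_integral_excessRisk_hardRegression x (fun σ => (h𝒮 _ (hg𝒮 σ)).2)
    hgx he0 he1 hh'0 hh'1 hn hnh' F.1 fun z i => (h𝒮 _ (F.2 z)).2 _
  refine le_ciSup_of_le (bddAbove_range_integral_excessRisk _ _ _ F.1)
    ⟨((uniformPULaw x (hardRegression h' (g σ)) fun _ => e_m), hardRegression h' (g σ)),
      puAdmissible_uniformPULaw_hardRegression x measurable_const (fun _ => ⟨he0.le, he1⟩)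
      (hg𝒮 σ) (h𝒮 _ (hg𝒮 σ)) hh hh'0 hh'1⟩ (le_trans ?_ hσ)
  exact mul_le_mul_of_nonneg_left
    (Real.sqrt_le_sqrt (div_le_div_of_nonneg_right (by linarith) hne.le)) (by positivity)
end
end

section
/- Assume the propensity satisfies e(x) ≥ e_m > 0 for all x ∈ ℝ^d and set C_e = 2/e_m − 1. Then for any pair of classifiers (g, g'), Var[r_SAR(g',(X,S)) − r_SAR(g,(X,S))] ≤ 2·C_e·E[|g(X) − g'(X)|²]. -/
open MeasureTheory ProbabilityTheory Real Filter Topology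

noncomputable section

/-! When `S, g, g'` take values in `{0,1}`, the increment of the SAR loss is
`(2S/e(X) - 1)·Δ(X)` with `Δ = g - g'`, whose square is `S·4(1 - e)/e²·Δ² + Δ²`.
Conditioning on `X`, the propensity identity turns `E[S·φ(X)]` into
`E[e(X)·Y·φ(X)] ≤ E[e(X)·φ(X)]`, so the first term has expectation at most
`E[4(1/e - 1)·Δ²] ≤ (4/e_m - 4)·E[Δ²]`. Bounding the variance by the second moment
gives `(4/e_m - 3)·E[Δ²] ≤ 2·C_e·E[Δ²]`. -/

lemma rSAR_sub_rSAR {α : Type*} (e g g' : α → ℝ) {x : α} {s : ℝ} (hs : s = 0 ∨ s = 1)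
    (hg : g x = 0 ∨ g x = 1) (hg' : g' x = 0 ∨ g' x = 1) :
    rSAR e g' (x, s) - rSAR e g (x, s) = (2 * s / e x - 1) * (g x - g' x) := by
  rcases hs with rfl | rfl <;> rcases hg with h | h <;> rcases hg' with h' | h' <;>
    simp [rSAR, h, h'] <;> ring

lemma sq_two_mul_div_sub_one_mul {s e d : ℝ} (hs : s = 0 ∨ s = 1) (he : e ≠ 0) :
    ((2 * s / e - 1) * d) ^ 2 = s * (4 * (1 - e) / e ^ 2 * d ^ 2) + d ^ 2 := by
  rcases hs with rfl | rfl <;> field_simp <;> ring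

section SetIntegralPreimage

variable {Ω α : Type*} [MeasurableSpace Ω] [MeasurableSpace α] {P : Measure Ω} {X : Ω → α}
  {f₁ f₂ : Ω → ℝ}

lemma map_withDensity_ofReal_eq_of_setIntegral_preimage_eq (hX : Measurable X)
    (hf₁ : Integrable f₁ P) (hf₂ : Integrable f₂ P) (hf₁0 : 0 ≤ᵐ[P] f₁) (hf₂0 : 0 ≤ᵐ[P] f₂)
    (h : ∀ A, MeasurableSet A → ∫ ω in X ⁻¹' A, f₁ ω ∂P = ∫ ω in X ⁻¹' A, f₂ ω ∂P) :
    (P.withDensity fun ω => ENNReal.ofReal (f₁ ω)).map X =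
      (P.withDensity fun ω => ENNReal.ofReal (f₂ ω)).map X := by
  ext A hA
  rw [Measure.map_apply hX hA, Measure.map_apply hX hA, withDensity_apply _ (hX hA),
    withDensity_apply _ (hX hA),
    ← ofReal_integral_eq_lintegral_ofReal hf₁.integrableOn (ae_restrict_of_ae hf₁0),
    ← ofReal_integral_eq_lintegral_ofReal hf₂.integrableOn (ae_restrict_of_ae hf₂0), h A hA]

lemma integral_mul_comp_eq_of_setIntegral_preimage_eq (hX : Measurable X)
    (hf₁ : Integrable f₁ P) (hf₂ : Integrable f₂ P) (hf₁0 : 0 ≤ᵐ[P] f₁) (hf₂0 : 0 ≤ᵐ[P] f₂)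
    (h : ∀ A, MeasurableSet A → ∫ ω in X ⁻¹' A, f₁ ω ∂P = ∫ ω in X ⁻¹' A, f₂ ω ∂P)
    {φ : α → ℝ} (hφ : Measurable φ) (hφ0 : 0 ≤ φ) :
    ∫ ω, f₁ ω * φ (X ω) ∂P = ∫ ω, f₂ ω * φ (X ω) ∂P := by
  have hlift : ∀ f : Ω → ℝ, Integrable f P → 0 ≤ᵐ[P] f → ∫ ω, f ω * φ (X ω) ∂P =
      (∫⁻ x, ENNReal.ofReal (φ x) ∂(P.withDensity fun ω => ENNReal.ofReal (f ω)).map X).toReal := by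
    intro f hf hf0
    rw [lintegral_map (by fun_prop) hX, lintegral_withDensity_eq_lintegral_mul₀
      hf.aestronglyMeasurable.aemeasurable.ennreal_ofReal (by fun_prop),
      integral_eq_lintegral_of_nonneg_ae (hf0.mono fun ω h => mul_nonneg h (hφ0 _))
        (hf.aestronglyMeasurable.mul (hφ.comp hX).aestronglyMeasurable)]
    congr 1
    refine lintegral_congr_ae (hf0.mono fun ω h => ?_)
    simp [ENNReal.ofReal_mul h]
  rw [hlift f₁ hf₁ hf₁0, hlift f₂ hf₂ hf₂0,
    map_withDensity_ofReal_eq_of_setIntegral_preimage_eq hX hf₁ hf₂ hf₁0 hf₂0 h]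

end SetIntegralPreimage

lemma IsPropensity.integral_mul_comp_le {Ω α : Type*} [MeasurableSpace Ω] [MeasurableSpace α]
    {P : Measure Ω} [IsFiniteMeasure P] {X : Ω → α} {Y S : Ω → ℝ} {e : α → ℝ}
    (hprop : IsPropensity P X Y S e) (hX : Measurable X) (hY : Measurable Y) (hS : Measurable S)
    (hS0 : 0 ≤ᵐ[P] S) (hY1 : ∀ᵐ ω ∂P, Y ω ≤ 1) {φ : α → ℝ} (hφ : Measurable φ) (hφ0 : 0 ≤ φ)
    (heφ : Integrable (fun ω => e (X ω) * φ (X ω)) P) :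
    ∫ ω, S ω * φ (X ω) ∂P ≤ ∫ ω, e (X ω) * φ (X ω) ∂P := by
  obtain ⟨he, he01, hSY, hid⟩ := hprop
  have hY0 : 0 ≤ᵐ[P] Y := by
    filter_upwards [hS0, hSY] with ω h0 h1 using h0.trans h1
  have hSi : Integrable S P := Integrable.of_bound hS.aestronglyMeasurable 1 (by
    filter_upwards [hS0, hSY, hY1] with ω h0 h1 h2
    rw [Real.norm_of_nonneg h0]
    exact h1.trans h2)
  have heYi : Integrable (fun ω => e (X ω) * Y ω) P :=
    Integrable.of_bound ((he.comp hX).mul hY).aestronglyMeasurable 1 (by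
      filter_upwards [hY0, hY1] with ω h0 h1
      rw [Real.norm_of_nonneg (mul_nonneg (he01 _).1 h0)]
      exact mul_le_one₀ (he01 _).2 h0 h1)
  calc ∫ ω, S ω * φ (X ω) ∂P = ∫ ω, e (X ω) * Y ω * φ (X ω) ∂P :=
        integral_mul_comp_eq_of_setIntegral_preimage_eq hX hSi heYi hS0
          (hY0.mono fun ω h => mul_nonneg (he01 _).1 h) hid hφ hφ0
    _ ≤ ∫ ω, e (X ω) * φ (X ω) ∂P := by
        refine integral_mono_of_nonneg
          (hY0.mono fun ω h => mul_nonneg (mul_nonneg (he01 _).1 h) (hφ0 _)) heφ ?_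
        filter_upwards [hY1] with ω h
        have := mul_nonneg (he01 (X ω)).1 (hφ0 (X ω))
        nlinarith

lemma four_mul_one_sub_div_sq_le {e_m e : ℝ} (hem : 0 < e_m) (he : e_m ≤ e) :
    4 * (1 - e) / e ^ 2 ≤ 4 / e_m ^ 2 :=
  calc 4 * (1 - e) / e ^ 2 ≤ 4 / e ^ 2 := by gcongr; linarith
    _ ≤ 4 / e_m ^ 2 := by gcongr

lemma mul_four_mul_one_sub_div_sq_le {e_m e : ℝ} (hem : 0 < e_m) (he : e_m ≤ e) :
    e * (4 * (1 - e) / e ^ 2) ≤ 4 / e_m - 4 := by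
  have : e * (4 * (1 - e) / e ^ 2) = 4 / e - 4 := by
    have := (hem.trans_le he).ne'
    field_simp
  rw [this]
  gcongr

lemma IsPropensity.integral_sq_two_mul_div_sub_one_mul_le {Ω α : Type*} [MeasurableSpace Ω]
    [MeasurableSpace α] {P : Measure Ω} [IsFiniteMeasure P] {X : Ω → α} {Y S : Ω → ℝ}
    {e : α → ℝ} (hprop : IsPropensity P X Y S e) (hX : Measurable X) (hY : Measurable Y)
    (hS : Measurable S) (hSb : ∀ᵐ ω ∂P, S ω = 0 ∨ S ω = 1) (hY1 : ∀ᵐ ω ∂P, Y ω ≤ 1)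
    {e_m : ℝ} (hem : 0 < e_m) (he : ∀ x, e_m ≤ e x) {Δ : α → ℝ} (hΔ : Measurable Δ)
    (hΔ2 : Integrable (fun ω => Δ (X ω) ^ 2) P) :
    ∫ ω, ((2 * S ω / e (X ω) - 1) * Δ (X ω)) ^ 2 ∂P ≤ (4 / e_m - 3) * ∫ ω, Δ (X ω) ^ 2 ∂P := by
  have he_meas : Measurable e := hprop.1
  have he0 : ∀ x, 0 < e x := fun x => hem.trans_le (he x)
  have hS0 : 0 ≤ᵐ[P] S := hSb.mono fun ω hs => by rcases hs with h | h <;> simp [h]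
  set φ : α → ℝ := fun x => 4 * (1 - e x) / e x ^ 2 * Δ x ^ 2
  have hφ : Measurable φ := by fun_prop
  have hφ0 : ∀ x, 0 ≤ φ x := fun x =>
    mul_nonneg (div_nonneg (by linarith [(hprop.2.1 x).2]) (sq_nonneg _)) (sq_nonneg _)
  have hφ_le : ∀ x, φ x ≤ 4 / e_m ^ 2 * Δ x ^ 2 := fun x =>
    mul_le_mul_of_nonneg_right (four_mul_one_sub_div_sq_le hem (he x)) (sq_nonneg _)
  have heφ_le : ∀ x, e x * φ x ≤ (4 / e_m - 4) * Δ x ^ 2 := fun x => by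
    simpa only [mul_assoc] using
      mul_le_mul_of_nonneg_right (mul_four_mul_one_sub_div_sq_le hem (he x)) (sq_nonneg (Δ x))
  have hSφi : Integrable (fun ω => S ω * φ (X ω)) P := by
    refine (hΔ2.const_mul (4 / e_m ^ 2)).mono' (by fun_prop) ?_
    filter_upwards [hSb] with ω hs
    rcases hs with h | h
    · simp only [h, zero_mul, norm_zero]; positivity
    · simpa [h, abs_of_nonneg (hφ0 _)] using hφ_le _
  have heφi : Integrable (fun ω => e (X ω) * φ (X ω)) P := by
    refine (hΔ2.const_mul (4 / e_m - 4)).mono' (by fun_prop) (ae_of_all _ fun ω => ?_)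
    rw [Real.norm_of_nonneg (mul_nonneg (he0 _).le (hφ0 _))]
    exact heφ_le _
  calc ∫ ω, ((2 * S ω / e (X ω) - 1) * Δ (X ω)) ^ 2 ∂P
      = ∫ ω, S ω * φ (X ω) ∂P + ∫ ω, Δ (X ω) ^ 2 ∂P := by
        rw [← integral_add hSφi hΔ2]
        exact integral_congr_ae (hSb.mono fun ω hs => sq_two_mul_div_sub_one_mul hs (he0 _).ne')
    _ ≤ ∫ ω, e (X ω) * φ (X ω) ∂P + ∫ ω, Δ (X ω) ^ 2 ∂P := by
        grw [hprop.integral_mul_comp_le hX hY hS hS0 hY1 hφ hφ0 heφi]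
    _ ≤ ∫ ω, (4 / e_m - 4) * Δ (X ω) ^ 2 ∂P + ∫ ω, Δ (X ω) ^ 2 ∂P := by
        grw [integral_mono heφi (hΔ2.const_mul _) fun ω => heφ_le _]
    _ = (4 / e_m - 3) * ∫ ω, Δ (X ω) ^ 2 ∂P := by
        rw [integral_const_mul]; ring

theorem variance_increment_rSAR_le_general
    (dim : ℕ) (Ω : Type*) [MeasurableSpace Ω] (P : Measure Ω) [IsProbabilityMeasure P]
    (X : Ω → (Fin dim → ℝ)) (Y S : Ω → ℝ) (e : (Fin dim → ℝ) → ℝ) (e_m : ℝ)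
    (g g' : (Fin dim → ℝ) → ℝ)
    (hX : Measurable X) (hY : Measurable Y) (hS : Measurable S)
    (hYb : ∀ᵐ ω ∂P, Y ω = 0 ∨ Y ω = 1) (hSb : ∀ᵐ ω ∂P, S ω = 0 ∨ S ω = 1)
    (hprop : IsPropensity P X Y S e)
    (hem : 0 < e_m) (he : ∀ x, e_m ≤ e x)
    (hg : IsClassifier g) (hg' : IsClassifier g') :
    variance (fun ω => rSAR e g' (X ω, S ω) - rSAR e g (X ω, S ω)) P ≤
      2 * (2 / e_m - 1) * ∫ ω, |g (X ω) - g' (X ω)| ^ 2 ∂P := by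
  obtain ⟨hgm, hg01⟩ := hg
  obtain ⟨hg'm, hg'01⟩ := hg'
  have he_meas : Measurable e := hprop.1
  have hY1 : ∀ᵐ ω ∂P, Y ω ≤ 1 := hYb.mono fun ω hy => by rcases hy with h | h <;> simp [h]
  have hΔ2 : Integrable (fun ω => (g (X ω) - g' (X ω)) ^ 2) P := by
    refine Integrable.of_bound (by fun_prop) 1 (ae_of_all _ fun ω => ?_)
    rcases hg01 (X ω) with h | h <;> rcases hg'01 (X ω) with h' | h' <;> simp [h, h']
  have hD : (fun ω => rSAR e g' (X ω, S ω) - rSAR e g (X ω, S ω)) =ᵐ[P]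
      fun ω => (2 * S ω / e (X ω) - 1) * (g (X ω) - g' (X ω)) :=
    hSb.mono fun ω hs => rSAR_sub_rSAR e g g' hs (hg01 _) (hg'01 _)
  calc variance _ P = variance (fun ω => (2 * S ω / e (X ω) - 1) * (g (X ω) - g' (X ω))) P :=
        variance_congr hD
    _ ≤ ∫ ω, ((2 * S ω / e (X ω) - 1) * (g (X ω) - g' (X ω))) ^ 2 ∂P :=
        variance_le_expectation_sq (by fun_prop)
    _ ≤ (4 / e_m - 3) * ∫ ω, (g (X ω) - g' (X ω)) ^ 2 ∂P :=
        hprop.integral_sq_two_mul_div_sub_one_mul_le hX hY hS hSb hY1 hem he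
          (Δ := fun x => g x - g' x) (by fun_prop) hΔ2
    _ ≤ 2 * (2 / e_m - 1) * ∫ ω, |g (X ω) - g' (X ω)| ^ 2 ∂P := by
        simp only [sq_abs]
        gcongr
        ring_nf
        linarith

/-- **Proposition 1.** If the propensity satisfies `e(x) ≥ e_m > 0` and
`C_e = 2/e_m − 1`, then for any pair of classifiers `(g, g')`,
`Var[r_SAR(g',(X,S)) − r_SAR(g,(X,S))] ≤ 2·C_e·E[|g(X) − g'(X)|²]`. -/
theorem variance_increment_rSAR_le
    (dim : ℕ) (Ω : Type*) [MeasurableSpace Ω] (P : Measure Ω) [IsProbabilityMeasure P]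
    (X : Ω → (Fin dim → ℝ)) (Y S : Ω → ℝ) (η e : (Fin dim → ℝ) → ℝ) (e_m : ℝ)
    (g g' : (Fin dim → ℝ) → ℝ)
    (hX : Measurable X) (hY : Measurable Y) (hS : Measurable S)
    (hYb : ∀ᵐ ω ∂P, Y ω = 0 ∨ Y ω = 1) (hSb : ∀ᵐ ω ∂P, S ω = 0 ∨ S ω = 1)
    (hreg : IsRegression P X Y η) (hprop : IsPropensity P X Y S e)
    (hem : 0 < e_m) (he : ∀ x, e_m ≤ e x)
    (hg : IsClassifier g) (hg' : IsClassifier g') :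
    variance (fun ω => rSAR e g' (X ω, S ω) - rSAR e g (X ω, S ω)) P ≤
      2 * (2 / e_m - 1) * ∫ ω, |g (X ω) - g' (X ω)| ^ 2 ∂P :=
  variance_increment_rSAR_le_general dim Ω P X Y S e e_m g g' hX hY hS hYb hSb hprop hem he hg hg'
end
end

section
/- Let K ≥ 1, V ≥ 1, n ≥ 1, h > 0, 0 < e_m ≤ 1, and C_e = 2/e_m − 1. Suppose ε* > 0 satisfies the fixed point equation √n·ε*² = K·ε*·√(2·C_e/h)·√( V·(1 + log(max( √(C_e·h)/(√2·ε*), 1 ))) ). Then ε* ≥ √(2·C_e·V/(n·h)) and ε*² ≤ 4·K²·(V/(n·h·e_m))·(1 + log(max(n·h²/V, 1))). -/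
/-!
Cancelling one factor `ε` and squaring turns the fixed point equation into
`n·h·ε² = 2·K²·C_e·V·L`, where `L = 1 + log(max(√(C_e·h)/(√2·ε), 1)) ≥ 1`. Since `K²·L ≥ 1`
this gives the lower bound on `ε`. The lower bound in turn makes the argument of the logarithm
at most `√(n·h²/V)/2 ≤ max(n·h²/V, 1)`, so `L ≤ 1 + log(max(n·h²/V, 1))`, and `2·C_e ≤ 4/e_m`
gives the upper bound.
-/

open Real

lemma one_le_two_div_sub_one {e : ℝ} (he0 : 0 < e) (he1 : e ≤ 1) : 1 ≤ 2 / e - 1 := by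
  have : 2 ≤ 2 / e := by rw [le_div_iff₀ he0]; linarith
  linarith

lemma two_mul_two_div_sub_one_le (e : ℝ) : 2 * (2 / e - 1) ≤ 4 / e := by
  linarith [show 2 * (2 / e) = 4 / e by ring]

lemma le_max_one_of_sq_le {x y : ℝ} (h : x ^ 2 ≤ y) : x ≤ max y 1 := by
  by_contra! hlt
  have hx1 : 1 < x := (le_max_right y 1).trans_lt hlt
  have hyx : y < x := (le_max_left y 1).trans_lt hlt
  nlinarith

lemma mul_sq_eq_of_sqrt_mul_sq_eq {x a b K ε : ℝ} (hε : ε ≠ 0) (hx : 0 ≤ x) (ha : 0 ≤ a)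
    (hb : 0 ≤ b) (heq : √x * ε ^ 2 = K * ε * √a * √b) : x * ε ^ 2 = K ^ 2 * a * b := by
  have hlin : √x * ε = K * √a * √b :=
    mul_right_cancel₀ hε (by linear_combination heq)
  have hsq := congrArg (· ^ 2) hlin
  simp only [mul_pow, sq_sqrt hx, sq_sqrt ha, sq_sqrt hb] at hsq
  exact hsq

section FixedPoint

variable {K c h ε n V L : ℝ}

lemma div_le_sq_of_fixed_point (hK : 1 ≤ K) (hL : 1 ≤ L) (hc : 0 ≤ c) (hV : 0 ≤ V)
    (hnh : 0 < n * h) (hsq : n * ε ^ 2 * h = K ^ 2 * (2 * c) * (V * L)) :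
    2 * c * V / (n * h) ≤ ε ^ 2 := by
  have hKL : 1 ≤ K ^ 2 * L := by nlinarith
  rw [div_le_iff₀ hnh]
  nlinarith [mul_le_mul_of_nonneg_right hKL (by positivity : 0 ≤ 2 * c * V)]

lemma sqrt_div_le_max_of_div_le_sq (hε : 0 < ε) (hc : 0 ≤ c) (hh : 0 < h) (hn : 0 < n)
    (hV : 0 < V) (hlow : 2 * c * V / (n * h) ≤ ε ^ 2) :
    √(c * h) / (√2 * ε) ≤ max (n * h ^ 2 / V) 1 := by
  apply le_max_one_of_sq_le
  rw [div_pow, mul_pow, sq_sqrt (by positivity), sq_sqrt zero_le_two,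
    div_le_div_iff₀ (by positivity) hV]
  rw [div_le_iff₀ (by positivity)] at hlow
  nlinarith [mul_le_mul_of_nonneg_left hlow hh.le, mul_nonneg (mul_nonneg hc hh.le) hV.le,
    (by positivity : 0 ≤ ε ^ 2 * (n * h) * h)]

end FixedPoint

/-- **Solution of the fixed point equation (Appendix A.3, first case).**
If `ε* > 0` solves `√n·ε*² = K·ε*·√(2·C_e/h)·√(V·(1 + log(max(√(C_e·h)/(√2·ε*), 1))))`
with `K ≥ 1`, `V, n ≥ 1`, `h > 0`, `0 < e_m ≤ 1` and `C_e = 2/e_m − 1`, then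
`ε* ≥ √(2·C_e·V/(n·h))` and `ε*² ≤ 4·K²·(V/(n·h·e_m))·(1 + log(max(n·h²/V, 1)))`. -/
theorem fixed_point_bounds
    (K h e_m ε : ℝ) (V n : ℕ)
    (hK : 1 ≤ K) (hV : 1 ≤ V) (hn : 1 ≤ n) (hh : 0 < h)
    (hem0 : 0 < e_m) (hem1 : e_m ≤ 1) (hε : 0 < ε)
    (heq : Real.sqrt (n : ℝ) * ε ^ 2 =
      K * ε * Real.sqrt (2 * (2 / e_m - 1) / h) *
        Real.sqrt ((V : ℝ) *
          (1 + Real.log (max (Real.sqrt ((2 / e_m - 1) * h) / (Real.sqrt 2 * ε)) 1)))) :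
    Real.sqrt (2 * (2 / e_m - 1) * (V : ℝ) / ((n : ℝ) * h)) ≤ ε ∧
      ε ^ 2 ≤ 4 * K ^ 2 * ((V : ℝ) / ((n : ℝ) * h * e_m)) *
        (1 + Real.log (max ((n : ℝ) * h ^ 2 / (V : ℝ)) 1)) := by
  set c := 2 / e_m - 1
  set L := 1 + log (max (√(c * h) / (√2 * ε)) 1)
  have hV0 : (0 : ℝ) < V := by exact_mod_cast hV
  have hn0 : (0 : ℝ) < n := by exact_mod_cast hn
  have hc : 0 ≤ c := zero_le_one.trans (one_le_two_div_sub_one hem0 hem1)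
  have hL : 1 ≤ L := le_add_of_nonneg_right (log_nonneg (le_max_right _ _))
  have hsq : (n : ℝ) * ε ^ 2 * h = K ^ 2 * (2 * c) * (V * L) := by
    rw [mul_sq_eq_of_sqrt_mul_sq_eq hε.ne' hn0.le (by positivity) (by positivity) heq]
    field_simp
  have hlow := div_le_sq_of_fixed_point hK hL hc hV0.le (by positivity) hsq
  refine ⟨(sqrt_le_left hε.le).2 hlow, ?_⟩
  have hLN : L ≤ 1 + log (max ((n : ℝ) * h ^ 2 / V) 1) :=
    add_le_add_right (log_le_log (by positivity)
      (max_le (sqrt_div_le_max_of_div_le_sq hε hc hh hn0 hV0 hlow) (le_max_right _ _))) 1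
  calc ε ^ 2 = K ^ 2 * (2 * c) * V * L / (n * h) := by
        rw [eq_div_iff (by positivity)]; linear_combination hsq
    _ ≤ K ^ 2 * (4 / e_m) * V * (1 + log (max ((n : ℝ) * h ^ 2 / V) 1)) / (n * h) := by
        gcongr
        exact two_mul_two_div_sub_one_le e_m
    _ = _ := by field_simp
end

section
/- Assume the propensity satisfies e(x) > 0 for all x ∈ ℝ^d. Then for any pair of classifiers (g, g'), E[(r_SAR(g,(X,S)) − r_SAR(g',(X,S)))²] = E[ (g(X) − g'(X))² · (1 + 4·η(X)·(1 − e(X))/e(X)) ]. -/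
open MeasureTheory ProbabilityTheory Real Filter Topology

noncomputable section

/-! On `{S = 0}` the two losses differ by `g(X) - g'(X)`, and on `{S = 1}` by `±(1 - 2/e(X))` where
`g(X) ≠ g'(X)`; hence the squared increment is `(g - g')²(X) · (1 + c(X) S)` with
`c = 4(1 - e)/e²`. Conditioning on `X`, `S` may be replaced by `e(X) Y` and then `Y` by `η(X)`.
Since `c` is unbounded when `e` approaches `0`, this is done for lower Lebesgue integrals: there
`∫⁻ F(X) h dP = ∫⁻ F d((P.withDensity h).map X)`, and that measure only depends on the integrals
of `h` over the events `{X ∈ A}`. -/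

open scoped ENNReal

section Transfer

variable {Ω α : Type*} [MeasurableSpace Ω] [MeasurableSpace α] {P : Measure Ω} {X : Ω → α}

theorem lintegral_comp_mul_eq_of_setLIntegral_preimage_eq (hX : Measurable X)
    {h₁ h₂ : Ω → ℝ≥0∞} (hh₁ : AEMeasurable h₁ P) (hh₂ : AEMeasurable h₂ P)
    (heq : ∀ A, MeasurableSet A → ∫⁻ ω in X ⁻¹' A, h₁ ω ∂P = ∫⁻ ω in X ⁻¹' A, h₂ ω ∂P)
    {F : α → ℝ≥0∞} (hF : Measurable F) :
    ∫⁻ ω, F (X ω) * h₁ ω ∂P = ∫⁻ ω, F (X ω) * h₂ ω ∂P := by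
  have hmap : (P.withDensity h₁).map X = (P.withDensity h₂).map X := by
    ext A hA
    rw [Measure.map_apply hX hA, Measure.map_apply hX hA,
      withDensity_apply _ (hX hA), withDensity_apply _ (hX hA)]
    exact heq A hA
  have hmul (h : Ω → ℝ≥0∞) (hh : AEMeasurable h P) :
      ∫⁻ ω, F (X ω) * h ω ∂P = ∫⁻ a, F a ∂(P.withDensity h).map X := by
    rw [lintegral_map hF hX,
      lintegral_withDensity_eq_lintegral_mul₀' hh (g := fun ω => F (X ω))
        (hF.comp hX).aemeasurable]
    simp only [Pi.mul_apply, mul_comm]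
  rw [hmul h₁ hh₁, hmul h₂ hh₂, hmap]

theorem lintegral_comp_mul_ofReal_eq_of_setIntegral_preimage_eq (hX : Measurable X)
    {f₁ f₂ : Ω → ℝ} (hf₁ : Integrable f₁ P) (hf₂ : Integrable f₂ P)
    (hf₁_nonneg : 0 ≤ᵐ[P] f₁) (hf₂_nonneg : 0 ≤ᵐ[P] f₂)
    (heq : ∀ A, MeasurableSet A → ∫ ω in X ⁻¹' A, f₁ ω ∂P = ∫ ω in X ⁻¹' A, f₂ ω ∂P)
    {F : α → ℝ≥0∞} (hF : Measurable F) :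
    ∫⁻ ω, F (X ω) * ENNReal.ofReal (f₁ ω) ∂P = ∫⁻ ω, F (X ω) * ENNReal.ofReal (f₂ ω) ∂P := by
  refine lintegral_comp_mul_eq_of_setLIntegral_preimage_eq hX
    hf₁.aemeasurable.ennreal_ofReal hf₂.aemeasurable.ennreal_ofReal (fun A hA => ?_) hF
  rw [← ofReal_integral_eq_lintegral_ofReal hf₁.restrict (ae_restrict_of_ae hf₁_nonneg),
    ← ofReal_integral_eq_lintegral_ofReal hf₂.restrict (ae_restrict_of_ae hf₂_nonneg), heq A hA]

end Transfer

theorem rSAR_sub_sq {α : Type*} {e g g' : α → ℝ} {x : α} {s : ℝ}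
    (hg : g x = 0 ∨ g x = 1) (hg' : g' x = 0 ∨ g' x = 1) (hs : s = 0 ∨ s = 1) (he : e x ≠ 0) :
    (rSAR e g (x, s) - rSAR e g' (x, s)) ^ 2
      = (g x - g' x) ^ 2 + (g x - g' x) ^ 2 * (4 * (1 - e x) / e x ^ 2) * s := by
  rcases hg with hg | hg <;> rcases hg' with hg' | hg' <;> rcases hs with rfl | rfl <;>
    simp only [rSAR, hg, hg'] <;> norm_num <;> field_simp <;> ring

section Propensity

variable {Ω α : Type*} [MeasurableSpace Ω] [MeasurableSpace α] {P : Measure Ω} [IsFiniteMeasure P]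
  {X : Ω → α} {Y S : Ω → ℝ} {η e : α → ℝ}

theorem IsPropensity.lintegral_comp_mul_ofReal_eq (hprop : IsPropensity P X Y S e)
    (hreg : IsRegression P X Y η) (hX : Measurable X) (hY : Measurable Y) (hS : Measurable S)
    (hYb : ∀ᵐ ω ∂P, Y ω = 0 ∨ Y ω = 1) (hSb : ∀ᵐ ω ∂P, S ω = 0 ∨ S ω = 1)
    {F : α → ℝ≥0∞} (hF : Measurable F) :
    ∫⁻ ω, F (X ω) * ENNReal.ofReal (S ω) ∂P
      = ∫⁻ ω, F (X ω) * ENNReal.ofReal (e (X ω) * η (X ω)) ∂P := by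
  obtain ⟨hη, hη01, hregI⟩ := hreg
  obtain ⟨he, he01, -, hpropI⟩ := hprop
  have mem_unit_of_zero_or_one {f : Ω → ℝ} (hf : ∀ᵐ ω ∂P, f ω = 0 ∨ f ω = 1) :
      ∀ᵐ ω ∂P, 0 ≤ f ω ∧ f ω ≤ 1 :=
    hf.mono fun ω h => by rcases h with h | h <;> simp [h]
  have integrable_of_mem_unit {f : Ω → ℝ} (hf : AEStronglyMeasurable f P)
      (h : ∀ᵐ ω ∂P, 0 ≤ f ω ∧ f ω ≤ 1) : Integrable f P :=
    .of_bound hf 1 (h.mono fun ω h => by rw [Real.norm_eq_abs, abs_le]; constructor <;> linarith)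
  have hY01 := mem_unit_of_zero_or_one hYb
  have hS01 := mem_unit_of_zero_or_one hSb
  have heY01 : ∀ᵐ ω ∂P, 0 ≤ e (X ω) * Y ω ∧ e (X ω) * Y ω ≤ 1 :=
    hY01.mono fun ω h => ⟨mul_nonneg (he01 _).1 h.1, mul_le_one₀ (he01 _).2 h.1 h.2⟩
  have hηX01 : ∀ᵐ ω ∂P, 0 ≤ η (X ω) ∧ η (X ω) ≤ 1 := .of_forall fun ω => hη01 (X ω)
  let Fe : α → ℝ≥0∞ := fun x => F x * ENNReal.ofReal (e x)
  calc ∫⁻ ω, F (X ω) * ENNReal.ofReal (S ω) ∂P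
      = ∫⁻ ω, F (X ω) * ENNReal.ofReal (e (X ω) * Y ω) ∂P :=
        lintegral_comp_mul_ofReal_eq_of_setIntegral_preimage_eq hX
          (integrable_of_mem_unit hS.aestronglyMeasurable hS01)
          (integrable_of_mem_unit ((he.comp hX).mul hY).aestronglyMeasurable heY01)
          (hS01.mono fun _ h => h.1) (heY01.mono fun _ h => h.1) hpropI hF
    _ = ∫⁻ ω, Fe (X ω) * ENNReal.ofReal (Y ω) ∂P :=
        lintegral_congr fun ω => by rw [ENNReal.ofReal_mul (he01 _).1, mul_assoc]
    _ = ∫⁻ ω, Fe (X ω) * ENNReal.ofReal (η (X ω)) ∂P :=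
        lintegral_comp_mul_ofReal_eq_of_setIntegral_preimage_eq hX
          (integrable_of_mem_unit hY.aestronglyMeasurable hY01)
          (integrable_of_mem_unit (hη.comp hX).aestronglyMeasurable hηX01)
          (hY01.mono fun _ h => h.1) (hηX01.mono fun _ h => h.1) hregI
          (hF.mul he.ennreal_ofReal)
    _ = ∫⁻ ω, F (X ω) * ENNReal.ofReal (e (X ω) * η (X ω)) ∂P :=
        lintegral_congr fun ω => by rw [ENNReal.ofReal_mul (he01 _).1, mul_assoc]

theorem IsPropensity.integral_comp_add_comp_mul_eq (hprop : IsPropensity P X Y S e)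
    (hreg : IsRegression P X Y η) (hX : Measurable X) (hY : Measurable Y) (hS : Measurable S)
    (hYb : ∀ᵐ ω ∂P, Y ω = 0 ∨ Y ω = 1) (hSb : ∀ᵐ ω ∂P, S ω = 0 ∨ S ω = 1)
    {A B : α → ℝ} (hA : Measurable A) (hB : Measurable B) (hA0 : 0 ≤ A) (hB0 : 0 ≤ B) :
    ∫ ω, A (X ω) + B (X ω) * S ω ∂P = ∫ ω, A (X ω) + B (X ω) * (e (X ω) * η (X ω)) ∂P := by
  have hS0 : 0 ≤ᵐ[P] S := hSb.mono fun ω h => by rcases h with h | h <;> simp [h]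
  have heη0 : 0 ≤ᵐ[P] fun ω => e (X ω) * η (X ω) :=
    .of_forall fun ω => mul_nonneg (hprop.2.1 _).1 (hreg.2.1 _).1
  have hsplit {t : Ω → ℝ} (ht : Measurable t) (ht0 : 0 ≤ᵐ[P] t) :
      ∫ ω, A (X ω) + B (X ω) * t ω ∂P
        = (∫⁻ ω, ENNReal.ofReal (A (X ω)) ∂P
            + ∫⁻ ω, ENNReal.ofReal (B (X ω)) * ENNReal.ofReal (t ω) ∂P).toReal := by
    rw [integral_eq_lintegral_of_nonneg_ae
        (ht0.mono fun ω h => add_nonneg (hA0 _) (mul_nonneg (hB0 _) h))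
        ((hA.comp hX).add ((hB.comp hX).mul ht)).aestronglyMeasurable,
      ← lintegral_add_left (f := fun ω => ENNReal.ofReal (A (X ω))) (hA.comp hX).ennreal_ofReal]
    refine congrArg ENNReal.toReal (lintegral_congr_ae (ht0.mono fun ω h => ?_))
    dsimp only
    rw [ENNReal.ofReal_add (hA0 _) (mul_nonneg (hB0 _) h), ENNReal.ofReal_mul (hB0 _)]
  rw [hsplit hS hS0,
    hsplit (t := fun ω => e (X ω) * η (X ω)) ((hprop.1.comp hX).mul (hreg.1.comp hX)) heη0,
    hprop.lintegral_comp_mul_ofReal_eq hreg hX hY hS hYb hSb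
      (F := fun x => ENNReal.ofReal (B x)) hB.ennreal_ofReal]

end Propensity

/-- **Second moment identity for increments of the SAR loss (Equation 22a).**
If the propensity satisfies `e(x) > 0`, then for any pair of classifiers `(g, g')`,
`E[(r_SAR(g,(X,S)) − r_SAR(g',(X,S)))²] = E[(g(X) − g'(X))²·(1 + 4·η(X)·(1 − e(X))/e(X))]`. -/
theorem second_moment_increment_rSAR
    (dim : ℕ) (Ω : Type*) [MeasurableSpace Ω] (P : Measure Ω) [IsProbabilityMeasure P]
    (X : Ω → (Fin dim → ℝ)) (Y S : Ω → ℝ) (η e : (Fin dim → ℝ) → ℝ)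
    (g g' : (Fin dim → ℝ) → ℝ)
    (hX : Measurable X) (hY : Measurable Y) (hS : Measurable S)
    (hYb : ∀ᵐ ω ∂P, Y ω = 0 ∨ Y ω = 1) (hSb : ∀ᵐ ω ∂P, S ω = 0 ∨ S ω = 1)
    (hreg : IsRegression P X Y η) (hprop : IsPropensity P X Y S e)
    (he : ∀ x, 0 < e x)
    (hg : IsClassifier g) (hg' : IsClassifier g') :
    ∫ ω, (rSAR e g (X ω, S ω) - rSAR e g' (X ω, S ω)) ^ 2 ∂P =
      ∫ ω, (g (X ω) - g' (X ω)) ^ 2 *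
        (1 + 4 * η (X ω) * (1 - e (X ω)) / e (X ω)) ∂P := by
  obtain ⟨hgm, hg01⟩ := hg
  obtain ⟨hg'm, hg'01⟩ := hg'
  have hem := hprop.1
  set B : (Fin dim → ℝ) → ℝ := fun x => (g x - g' x) ^ 2 * (4 * (1 - e x) / e x ^ 2)
  have hB0 : 0 ≤ B := fun x =>
    mul_nonneg (sq_nonneg _) (div_nonneg (by linarith [(hprop.2.1 x).2]) (sq_nonneg _))
  calc ∫ ω, (rSAR e g (X ω, S ω) - rSAR e g' (X ω, S ω)) ^ 2 ∂P
      = ∫ ω, (g (X ω) - g' (X ω)) ^ 2 + B (X ω) * S ω ∂P :=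
        integral_congr_ae (hSb.mono fun ω hs => rSAR_sub_sq (hg01 _) (hg'01 _) hs (he _).ne')
    _ = ∫ ω, (g (X ω) - g' (X ω)) ^ 2 + B (X ω) * (e (X ω) * η (X ω)) ∂P :=
        hprop.integral_comp_add_comp_mul_eq hreg hX hY hS hYb hSb
          (A := fun x => (g x - g' x) ^ 2) (by fun_prop)
          ((hgm.sub hg'm).pow_const 2 |>.mul (by fun_prop)) (fun _ => sq_nonneg _) hB0
    _ = _ := integral_congr_ae (.of_forall fun ω => by
        have hne := (he (X ω)).ne'
        simp only [B]
        field_simp)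
end
end
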